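/- arXiv:1006.3459 — 2 statements merged into one kernel-verified Lean document; each statement's English description precedes it below -/
import Mathlib

section
/- Let T > 0, I ≥ 1, and for k = 1, 2 let B^k = (B^k_{j→i})_{1≤i,j≤I} and d^k = (d^k_i)_{1≤i≤I} be families of nonnegative functions on ℝ × [0,∞), T-periodic in t. Fix μ₁, μ₂ ∈ ℝ and suppose φ^1 = (φ^1_j)_{1≤j≤I} is a system subeigenfunction for (B^1, d^1, μ₁) and φ^2 = (φ^2_j)_{1≤j≤I} is a system subeigenfunction for (B^2, d^2, μ₂). Then for every θ ∈ [0,1], the family φ^θ_j(t,x) = φ^1_j(t,x)^θ · φ^2_j(t,x)^{1−θ} is a system subeigenfunction for (B^θ, d^θ, θμ₁ + (1−θ)μ₂), where B^θ_{j→i}(t,x) = B^1_{j→i}(t,x)^θ · B^2_{j→i}(t,x)^{1−θ} and d^θ_i(t,x) = θ d^1_i(t,x) + (1−θ) d^2_i(t,x). -/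
open MeasureTheory Real Finset

noncomputable section

/-!
The geometric mean `ψ = φ₁^θ φ₂^(1-θ)` has logarithmic derivatives `θ ∂φ₁/φ₁ + (1-θ) ∂φ₂/φ₂`,
so `(-∂ₜ - ∂ₓ + d^θ + μ^θ) ψ / ψ` is the `θ`-convex combination of the corresponding quotients
for `φ₁` and `φ₂`. On the birth side each term `(B₁ φ₁(0))^θ (B₂ φ₂(0))^(1-θ) / ψ` is bounded by
the same convex combination of `B₁ φ₁(0) / φ₁` and `B₂ φ₂(0) / φ₂`, by the weighted AM-GM
inequality.
-/

/-- A system subeigenfunction for the `I`-phase renewal system with birth rates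
`B j i` (from phase `j` to phase `i`), death rates `d j`, and value `μ` :
a family `φ j` of everywhere positive functions on `ℝ × [0,∞)`, differentiable
in both variables, `T`-periodic in `t`, satisfying for every phase `j` and all
`t ∈ ℝ`, `x ≥ 0` :
`-∂ₜφ_j - ∂ₓφ_j + (d_j + μ) φ_j ≥ Σᵢ B_{j→i}(t,x) φ_i(t,0)`. -/
def IsSysSubeig (T : ℝ) (I : ℕ) (B : Fin I → Fin I → ℝ → ℝ → ℝ)
    (d : Fin I → ℝ → ℝ → ℝ) (μ : ℝ) (φ : Fin I → ℝ → ℝ → ℝ) : Prop :=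
  (∀ j t x, 0 ≤ x → 0 < φ j t x) ∧
  (∀ j t x, 0 ≤ x → DifferentiableAt ℝ (fun p : ℝ × ℝ => φ j p.1 p.2) (t, x)) ∧
  (∀ j t x, 0 ≤ x → φ j (t + T) x = φ j t x) ∧
  (∀ j t x, 0 ≤ x →
    (∑ i : Fin I, B j i t x * φ i t 0) ≤
      -(deriv (fun s => φ j s x) t) - deriv (fun y => φ j t y) x
        + (d j t x + μ) * φ j t x)

section PartialDerivatives

variable {𝕜 E F G : Type*} [NontriviallyNormedField 𝕜] [NormedAddCommGroup E] [NormedSpace 𝕜 E]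
  [NormedAddCommGroup F] [NormedSpace 𝕜 F] [NormedAddCommGroup G] [NormedSpace 𝕜 G]
  {f : E → F → G} {x : E} {y : F}

theorem DifferentiableAt.uncurry_left
    (h : DifferentiableAt 𝕜 (fun p : E × F => f p.1 p.2) (x, y)) :
    DifferentiableAt 𝕜 (fun s => f s y) x :=
  h.comp (f := fun s => (s, y)) x (differentiableAt_id.prodMk (differentiableAt_const y))

theorem DifferentiableAt.uncurry_right
    (h : DifferentiableAt 𝕜 (fun p : E × F => f p.1 p.2) (x, y)) :
    DifferentiableAt 𝕜 (fun s => f x s) y :=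
  h.comp (f := fun s => (x, s)) y ((differentiableAt_const x).prodMk differentiableAt_id)

end PartialDerivatives

theorem HasDerivAt.rpow_mul_rpow {f g : ℝ → ℝ} {f' g' t : ℝ} (p q : ℝ)
    (hf : HasDerivAt f f' t) (hg : HasDerivAt g g' t) (hf0 : 0 < f t) (hg0 : 0 < g t) :
    HasDerivAt (fun s => f s ^ p * g s ^ q)
      ((p * (f' / f t) + q * (g' / g t)) * (f t ^ p * g t ^ q)) t := by
  refine ((hf.rpow_const (p := p) (Or.inl hf0.ne')).mul
    (hg.rpow_const (p := q) (Or.inl hg0.ne'))).congr_deriv ?_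
  rw [rpow_sub_one hf0.ne', rpow_sub_one hg0.ne']
  field_simp

namespace Real

variable {θ a b : ℝ}

theorem rpow_mul_rpow_one_sub_le (hθ₀ : 0 ≤ θ) (hθ₁ : θ ≤ 1) (ha : 0 < a) (hb : 0 < b)
    {u v : ℝ} (hu : 0 ≤ u) (hv : 0 ≤ v) :
    u ^ θ * v ^ (1 - θ) ≤ a ^ θ * b ^ (1 - θ) * (θ * (u / a) + (1 - θ) * (v / b)) := by
  have hamgm := geom_mean_le_arith_mean2_weighted hθ₀ (sub_nonneg.2 hθ₁)
    (div_nonneg hu ha.le) (div_nonneg hv hb.le) (add_sub_cancel θ 1)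
  calc u ^ θ * v ^ (1 - θ)
      = a ^ θ * b ^ (1 - θ) * ((u / a) ^ θ * (v / b) ^ (1 - θ)) := by
        rw [div_rpow hu ha.le, div_rpow hv hb.le]
        field_simp
    _ ≤ _ := by gcongr

theorem sum_rpow_mul_rpow_one_sub_le {ι : Type*} (s : Finset ι) (hθ₀ : 0 ≤ θ) (hθ₁ : θ ≤ 1)
    (ha : 0 < a) (hb : 0 < b) {u v : ι → ℝ} (hu : ∀ i ∈ s, 0 ≤ u i) (hv : ∀ i ∈ s, 0 ≤ v i)
    {R₁ R₂ : ℝ} (hR₁ : ∑ i ∈ s, u i ≤ R₁) (hR₂ : ∑ i ∈ s, v i ≤ R₂) :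
    ∑ i ∈ s, u i ^ θ * v i ^ (1 - θ) ≤
      a ^ θ * b ^ (1 - θ) * (θ * (R₁ / a) + (1 - θ) * (R₂ / b)) := by
  have hθ₁' : 0 ≤ 1 - θ := sub_nonneg.2 hθ₁
  calc ∑ i ∈ s, u i ^ θ * v i ^ (1 - θ)
      ≤ ∑ i ∈ s, a ^ θ * b ^ (1 - θ) * (θ * (u i / a) + (1 - θ) * (v i / b)) :=
        sum_le_sum fun i hi => rpow_mul_rpow_one_sub_le hθ₀ hθ₁ ha hb (hu i hi) (hv i hi)
    _ = a ^ θ * b ^ (1 - θ) * (θ * ((∑ i ∈ s, u i) / a) + (1 - θ) * ((∑ i ∈ s, v i) / b)) := by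
        rw [← mul_sum, sum_add_distrib, ← mul_sum, ← mul_sum, sum_div, sum_div]
    _ ≤ _ := by gcongr

end Real

namespace IsSysSubeig

variable {T : ℝ} {I : ℕ} {B₁ B₂ : Fin I → Fin I → ℝ → ℝ → ℝ} {d₁ d₂ : Fin I → ℝ → ℝ → ℝ}
  {μ₁ μ₂ θ : ℝ} {φ₁ φ₂ : Fin I → ℝ → ℝ → ℝ}

theorem geometric_sum_le
    (hB₁ : ∀ j i t x, 0 ≤ x → 0 ≤ B₁ j i t x) (hB₂ : ∀ j i t x, 0 ≤ x → 0 ≤ B₂ j i t x)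
    (h₁ : IsSysSubeig T I B₁ d₁ μ₁ φ₁) (h₂ : IsSysSubeig T I B₂ d₂ μ₂ φ₂)
    (hθ₀ : 0 ≤ θ) (hθ₁ : θ ≤ 1) (j : Fin I) (t x : ℝ) (hx : 0 ≤ x) :
    ∑ i, B₁ j i t x ^ θ * B₂ j i t x ^ (1 - θ) * (φ₁ i t 0 ^ θ * φ₂ i t 0 ^ (1 - θ)) ≤
      -deriv (fun s => φ₁ j s x ^ θ * φ₂ j s x ^ (1 - θ)) t
        - deriv (fun y => φ₁ j t y ^ θ * φ₂ j t y ^ (1 - θ)) x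
        + (θ * d₁ j t x + (1 - θ) * d₂ j t x + (θ * μ₁ + (1 - θ) * μ₂))
          * (φ₁ j t x ^ θ * φ₂ j t x ^ (1 - θ)) := by
  obtain ⟨hpos₁, hdiff₁, -, hsub₁⟩ := h₁
  obtain ⟨hpos₂, hdiff₂, -, hsub₂⟩ := h₂
  have ha := hpos₁ j t x hx
  have hb := hpos₂ j t x hx
  rw [((hdiff₁ j t x hx).uncurry_left.hasDerivAt.rpow_mul_rpow θ (1 - θ)
      (hdiff₂ j t x hx).uncurry_left.hasDerivAt ha hb).deriv,
    ((hdiff₁ j t x hx).uncurry_right.hasDerivAt.rpow_mul_rpow θ (1 - θ)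
      (hdiff₂ j t x hx).uncurry_right.hasDerivAt ha hb).deriv]
  have hbirth₁ i : 0 ≤ B₁ j i t x * φ₁ i t 0 := mul_nonneg (hB₁ j i t x hx) (hpos₁ i t 0 le_rfl).le
  have hbirth₂ i : 0 ≤ B₂ j i t x * φ₂ i t 0 := mul_nonneg (hB₂ j i t x hx) (hpos₂ i t 0 le_rfl).le
  calc ∑ i, B₁ j i t x ^ θ * B₂ j i t x ^ (1 - θ) * (φ₁ i t 0 ^ θ * φ₂ i t 0 ^ (1 - θ))
      = ∑ i, (B₁ j i t x * φ₁ i t 0) ^ θ * (B₂ j i t x * φ₂ i t 0) ^ (1 - θ) := by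
        refine sum_congr rfl fun i _ => ?_
        rw [mul_rpow (hB₁ j i t x hx) (hpos₁ i t 0 le_rfl).le,
          mul_rpow (hB₂ j i t x hx) (hpos₂ i t 0 le_rfl).le]
        ring
    _ ≤ _ := sum_rpow_mul_rpow_one_sub_le _ hθ₀ hθ₁ ha hb (fun i _ => hbirth₁ i)
        (fun i _ => hbirth₂ i) (hsub₁ j t x hx) (hsub₂ j t x hx)
    _ = _ := by
        field_simp
        ring

end IsSysSubeig

theorem sysSubeig_geometric_convex_combination_general
    (T : ℝ) (I : ℕ)
    (B₁ B₂ : Fin I → Fin I → ℝ → ℝ → ℝ) (d₁ d₂ : Fin I → ℝ → ℝ → ℝ)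
    (hB₁ : ∀ j i t x, 0 ≤ x → 0 ≤ B₁ j i t x)
    (hB₂ : ∀ j i t x, 0 ≤ x → 0 ≤ B₂ j i t x)
    (μ₁ μ₂ : ℝ) (φ₁ φ₂ : Fin I → ℝ → ℝ → ℝ)
    (h₁ : IsSysSubeig T I B₁ d₁ μ₁ φ₁) (h₂ : IsSysSubeig T I B₂ d₂ μ₂ φ₂)
    (θ : ℝ) (hθ : θ ∈ Set.Icc (0 : ℝ) 1) :
    IsSysSubeig T I
      (fun j i t x => B₁ j i t x ^ θ * B₂ j i t x ^ (1 - θ))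
      (fun i t x => θ * d₁ i t x + (1 - θ) * d₂ i t x)
      (θ * μ₁ + (1 - θ) * μ₂)
      (fun j t x => φ₁ j t x ^ θ * φ₂ j t x ^ (1 - θ)) := by
  refine ⟨fun j t x hx => ?_, fun j t x hx => ?_, fun j t x hx => ?_,
    h₁.geometric_sum_le hB₁ hB₂ h₂ hθ.1 hθ.2⟩
  · exact mul_pos (rpow_pos_of_pos (h₁.1 j t x hx) θ) (rpow_pos_of_pos (h₂.1 j t x hx) _)
  · exact ((h₁.2.1 j t x hx).rpow_const (Or.inl (h₁.1 j t x hx).ne')).mul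
      ((h₂.2.1 j t x hx).rpow_const (Or.inl (h₂.1 j t x hx).ne'))
  · simp only [h₁.2.2.1 j t x hx, h₂.2.2.1 j t x hx]

/-- Geometric interpolation of system subeigenfunctions: if `φ¹` is a system
subeigenfunction for `(B¹, d¹, μ₁)` and `φ²` one for `(B², d², μ₂)`, then
`φ^θ_j = (φ¹_j)^θ (φ²_j)^{1-θ}` is a system subeigenfunction for the
coefficients `B^θ_{j→i} = (B¹_{j→i})^θ (B²_{j→i})^{1-θ}`,
`d^θ_i = θ d¹_i + (1-θ) d²_i`, and the value `θ μ₁ + (1-θ) μ₂`. -/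
theorem sysSubeig_geometric_convex_combination
    (T : ℝ) (hT : 0 < T) (I : ℕ) (hI : 1 ≤ I)
    (B₁ B₂ : Fin I → Fin I → ℝ → ℝ → ℝ) (d₁ d₂ : Fin I → ℝ → ℝ → ℝ)
    (hB₁ : ∀ j i t x, 0 ≤ x → 0 ≤ B₁ j i t x)
    (hB₂ : ∀ j i t x, 0 ≤ x → 0 ≤ B₂ j i t x)
    (hd₁ : ∀ i t x, 0 ≤ x → 0 ≤ d₁ i t x)
    (hd₂ : ∀ i t x, 0 ≤ x → 0 ≤ d₂ i t x)
    (hB₁p : ∀ j i t x, 0 ≤ x → B₁ j i (t + T) x = B₁ j i t x)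
    (hB₂p : ∀ j i t x, 0 ≤ x → B₂ j i (t + T) x = B₂ j i t x)
    (hd₁p : ∀ i t x, 0 ≤ x → d₁ i (t + T) x = d₁ i t x)
    (hd₂p : ∀ i t x, 0 ≤ x → d₂ i (t + T) x = d₂ i t x)
    (μ₁ μ₂ : ℝ) (φ₁ φ₂ : Fin I → ℝ → ℝ → ℝ)
    (h₁ : IsSysSubeig T I B₁ d₁ μ₁ φ₁) (h₂ : IsSysSubeig T I B₂ d₂ μ₂ φ₂)
    (θ : ℝ) (hθ : θ ∈ Set.Icc (0 : ℝ) 1) :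
    IsSysSubeig T I
      (fun j i t x => B₁ j i t x ^ θ * B₂ j i t x ^ (1 - θ))
      (fun i t x => θ * d₁ i t x + (1 - θ) * d₂ i t x)
      (θ * μ₁ + (1 - θ) * μ₂)
      (fun j t x => φ₁ j t x ^ θ * φ₂ j t x ^ (1 - θ)) :=
  sysSubeig_geometric_convex_combination_general T I B₁ B₂ d₁ d₂ hB₁ hB₂ μ₁ μ₂ φ₁ φ₂ h₁ h₂ θ hθ
end
end

section
/- Let T > 0, let B, d : ℝ × [0,∞) → ℝ be nonnegative and T-periodic in t, and let λ ∈ ℝ. Suppose N : ℝ × [0,∞) → ℝ is a T-periodic (in t) Floquet eigenfunction for the eigenvalue λ: N is nonnegative, differentiable in both variables, T-periodic in t, and satisfies ∂_t N(t,x) + ∂_x N(t,x) + (d(t,x) + λ) N(t,x) = 0 with N(t,0) = ∫₀^∞ B(t,x) N(t,x) dx. Let μ ∈ ℝ admit a positive T-periodic subeigenfunction φ for (B, d, μ). Assume, with n(t,x) = e^{λ t} N(t,x), for each t that x ↦ n(t,x)φ(t,x), x ↦ ∂_x(nφ)(t,x), x ↦ B(t,x)n(t,x) and x ↦ d(t,x)n(t,x)φ(t,x)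 are integrable on (0,∞), that n(t,x)φ(t,x) → 0 as x → ∞, that F(t) = ∫₀^∞ n(t,x) φ(t,x) dx is differentiable with F′(t) = ∫₀^∞ ∂_t (n φ)(t,x) dx, and that ∫₀^∞ N(0,x) φ(0,x) dx > 0. Then λ ≤ μ; in particular, when Floquet eigenelements exist, the Floquet eigenvalue is at most the infimum of the μ admitting positive subeigenfunctions. -/
open MeasureTheory Real

noncomputable section

/-- A positive `T`-periodic subeigenfunction for birth rate `B`, death rate `d`
and value `μ`. -/
def IsSubeig (T : ℝ) (B d : ℝ → ℝ → ℝ) (μ : ℝ) (φ : ℝ → ℝ → ℝ) : Prop :=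
  (∀ t x, 0 ≤ x → 0 < φ t x) ∧
  (∀ t x, 0 ≤ x → DifferentiableAt ℝ (fun p : ℝ × ℝ => φ p.1 p.2) (t, x)) ∧
  (∀ t x, 0 ≤ x → φ (t + T) x = φ t x) ∧
  (∀ t x, 0 ≤ x →
    B t x * φ t 0 ≤
      -(deriv (fun s => φ s x) t) - deriv (fun y => φ t y) x + (d t x + μ) * φ t x)

/-!
With `κ = λ - μ`, the weighted density `Q(t, x) = e^{κt} N(t, x) φ(t, x) = e^{-μt} n(t, x) φ(t, x)`
satisfies `(∂ₜ + ∂ₓ) Q ≤ -e^{κt} φ(t, 0) B N ≤ 0`: in the eigenvalue equation for `N` and the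
subeigenfunction inequality for `φ` the death rate cancels. Integrating along the characteristics
`t - x = c` through the half-strip `(0, T) × (0, ∞)` gives the balance
`∫ Q(T, ·) + loss = ∫ Q(0, ·) + ∫₀ᵀ Q(t, 0) dt`, the loss being the integral of `-(∂ₜ + ∂ₓ) Q`
over the strip. By the renewal condition `N(t, 0) = ∫ B N` the influx `∫₀ᵀ Q(t, 0) dt` through the
boundary is at most the loss, so `∫ Q(T, ·) ≤ ∫ Q(0, ·)`. By periodicity the left side is
`e^{κT} ∫ Q(0, ·)`, whence `κ ≤ 0`. The balance is an identity between lower Lebesgue integrals,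
which is what makes it valid without any integrability of `(∂ₜ + ∂ₓ) Q`.
-/

open Set

theorem ofReal_add_setLIntegral_ofReal_neg_deriv {g g' : ℝ → ℝ} {a b : ℝ} (hab : a ≤ b)
    (hcont : ContinuousOn g (Icc a b)) (hderiv : ∀ x ∈ Ioo a b, HasDerivAt g (g' x) x)
    (hg' : ∀ x ∈ Ioo a b, g' x ≤ 0) (hb : 0 ≤ g b) :
    ENNReal.ofReal (g b) + ∫⁻ x in Ioo a b, ENNReal.ofReal (-g' x) = ENNReal.ofReal (g a) := by
  have hint : IntegrableOn (fun x => -g' x) (Ioc a b) :=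
    intervalIntegral.integrableOn_deriv_of_nonneg hcont.neg (fun x hx => (hderiv x hx).neg)
      fun x hx => neg_nonneg.2 (hg' x hx)
  have hftc : ∫ x in Ioo a b, -g' x = g a - g b := by
    rw [← integral_Ioc_eq_integral_Ioo, ← intervalIntegral.integral_of_le hab,
      intervalIntegral.integral_eq_sub_of_hasDerivAt_of_le hab hcont.neg
        (fun x hx => (hderiv x hx).neg)
        ((intervalIntegrable_iff_integrableOn_Ioc_of_le hab).2 hint)]
    simp only [Pi.neg_apply]
    ring
  have hdecrease : 0 ≤ g a - g b :=
    hftc ▸ setIntegral_nonneg measurableSet_Ioo fun x hx => neg_nonneg.2 (hg' x hx)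
  have hlin : ∫⁻ x in Ioo a b, ENNReal.ofReal (-g' x) = ENNReal.ofReal (g a - g b) :=
    hftc ▸ (ofReal_integral_eq_lintegral_ofReal (hint.mono_set Ioo_subset_Ioc_self)
      (ae_restrict_of_forall_mem measurableSet_Ioo fun x hx => neg_nonneg.2 (hg' x hx))).symm
  rw [hlin, ← ENNReal.ofReal_add hb hdecrease, add_sub_cancel]

theorem DifferentiableAt.hasLineDerivAt_one_one {f : ℝ → ℝ → ℝ} {t x : ℝ}
    (hf : DifferentiableAt ℝ (fun p : ℝ × ℝ => f p.1 p.2) (t, x)) :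
    HasLineDerivAt ℝ (fun p : ℝ × ℝ => f p.1 p.2)
      (deriv (fun s => f s x) t + deriv (fun y => f t y) x) (t, x) (1, 1) := by
  have hfst : HasDerivAt (fun s => f s x)
      (fderiv ℝ (fun p : ℝ × ℝ => f p.1 p.2) (t, x) (1, 0)) t :=
    hf.hasFDerivAt.comp_hasDerivAt (f := fun s : ℝ => (s, x)) t
      ((hasDerivAt_id t).prodMk (hasDerivAt_const t x))
  have hsnd : HasDerivAt (fun y => f t y)
      (fderiv ℝ (fun p : ℝ × ℝ => f p.1 p.2) (t, x) (0, 1)) x :=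
    hf.hasFDerivAt.comp_hasDerivAt (f := fun y : ℝ => (t, y)) x
      ((hasDerivAt_const x t).prodMk (hasDerivAt_id x))
  have := hf.hasFDerivAt.hasLineDerivAt (v := ((1, 1) : ℝ × ℝ))
  rwa [show ((1, 1) : ℝ × ℝ) = (1, 0) + (0, 1) by simp, map_add, ← hfst.deriv, ← hsnd.deriv,
    Prod.mk_add_mk, add_zero, zero_add] at this

theorem setLIntegral_Iio_comp_const_sub (f : ℝ → ENNReal) (a : ℝ) :
    ∫⁻ c in Iio a, f (a - c) = ∫⁻ x in Ioi 0, f x := by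
  simpa using (Measure.measurePreserving_sub_left volume a).setLIntegral_comp_preimage_emb
    (MeasurableEquiv.subLeft a).measurableEmbedding f (Ioi 0)

/-- `c = t - x` labels the characteristic through `(t, x) = (c + y, y)`. -/
theorem setLIntegral_Ioo_prod_Ioi_eq_lintegral_characteristics {f : ℝ × ℝ → ENNReal}
    (hf : Measurable f) (T : ℝ) :
    ∫⁻ p in Ioo 0 T ×ˢ Ioi 0, f p =
      ∫⁻ c in Iio T, ∫⁻ y in Ioo (max 0 (-c)) (T - c), f (c + y, y) := by
  set S := (fun z : ℝ × ℝ => (z.1 + z.2, z.2)) ⁻¹' (Ioo 0 T ×ˢ Ioi 0)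
  have hS : MeasurableSet S := (measurableSet_Ioo.prod measurableSet_Ioi).preimage (by fun_prop)
  have hslice : ∀ c y, S.indicator (fun z => f (z.1 + z.2, z.2)) (c, y) =
      (Ioo (max 0 (-c)) (T - c)).indicator (fun y => f (c + y, y)) y := by
    intro c y
    simp only [S, indicator, mem_preimage, mem_prod, mem_Ioo, mem_Ioi, max_lt_iff]
    congr 1
    grind
  have hempty : ∀ c ∈ (Iio T)ᶜ, ∫⁻ y in Ioo (max 0 (-c)) (T - c), f (c + y, y) = 0 := by
    intro c hc
    rw [Ioo_eq_empty (not_lt.2 ((sub_nonpos.2 (notMem_Iio.1 hc)).trans (le_max_left _ _))),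
      Measure.restrict_empty, lintegral_zero_measure]
  rw [Measure.volume_eq_prod,
    ← (measurePreserving_add_prod volume volume).setLIntegral_comp_preimage
      (measurableSet_Ioo.prod measurableSet_Ioi) hf, ← lintegral_indicator hS,
    lintegral_prod _ (Measurable.indicator (by fun_prop) hS).aemeasurable,
    ← lintegral_add_compl _ measurableSet_Iio]
  simp only [hslice, lintegral_indicator measurableSet_Ioo]
  rw [setLIntegral_congr_fun measurableSet_Iio.compl hempty, lintegral_zero, add_zero]

section Transport

variable {Q : ℝ × ℝ → ℝ} {T : ℝ}

theorem ofReal_add_lintegral_neg_fderiv_along_characteristic (hT : 0 ≤ T)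
    (hQ : ∀ p : ℝ × ℝ, 0 ≤ p.2 → 0 ≤ Q p)
    (hdiff : ∀ p : ℝ × ℝ, 0 ≤ p.2 → DifferentiableAt ℝ Q p)
    (hdecr : ∀ p : ℝ × ℝ, 0 ≤ p.2 → fderiv ℝ Q p (1, 1) ≤ 0) {c : ℝ} (hc : c < T) :
    ENNReal.ofReal (Q (T, T - c)) +
        ∫⁻ y in Ioo (max 0 (-c)) (T - c), ENNReal.ofReal (-fderiv ℝ Q (c + y, y) (1, 1)) =
      ENNReal.ofReal (Q (c + max 0 (-c), max 0 (-c))) := by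
  have hderiv : ∀ y, 0 ≤ y →
      HasDerivAt (fun y => Q (c + y, y)) (fderiv ℝ Q (c + y, y) (1, 1)) y := fun y hy =>
    (hdiff (c + y, y) hy).hasFDerivAt.comp_hasDerivAt (f := fun y : ℝ => (c + y, y)) y
      (((hasDerivAt_id y).const_add c).prodMk (hasDerivAt_id y))
  have hinside : ∀ y ∈ Icc (max 0 (-c)) (T - c), 0 ≤ y :=
    fun y hy => (le_max_left _ _).trans hy.1
  have := ofReal_add_setLIntegral_ofReal_neg_deriv (g := fun y => Q (c + y, y))
    (max_le (sub_nonneg.2 hc.le) (by linarith))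
    (fun y hy => (hderiv y (hinside y hy)).continuousAt.continuousWithinAt)
    (fun y hy => hderiv y (hinside y (Ioo_subset_Icc_self hy)))
    (fun y hy => hdecr (c + y, y) (hinside y (Ioo_subset_Icc_self hy)))
    (hQ (c + (T - c), T - c) (sub_nonneg.2 hc.le))
  rwa [add_sub_cancel] at this

theorem lintegral_transport_balance (hT : 0 ≤ T)
    (hQ : ∀ p : ℝ × ℝ, 0 ≤ p.2 → 0 ≤ Q p)
    (hdiff : ∀ p : ℝ × ℝ, 0 ≤ p.2 → DifferentiableAt ℝ Q p)
    (hdecr : ∀ p : ℝ × ℝ, 0 ≤ p.2 → fderiv ℝ Q p (1, 1) ≤ 0) :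
    (∫⁻ x in Ioi 0, ENNReal.ofReal (Q (T, x))) +
        ∫⁻ t in Ioo 0 T, ∫⁻ x in Ioi 0, ENNReal.ofReal (-fderiv ℝ Q (t, x) (1, 1)) =
      (∫⁻ x in Ioi 0, ENNReal.ofReal (Q (0, x))) + ∫⁻ t in Ioo 0 T, ENNReal.ofReal (Q (t, 0)) := by
  have hloss : Measurable fun p => ENNReal.ofReal (-fderiv ℝ Q p (1, 1)) :=
    (measurable_fderiv_apply_const ℝ Q (1, 1)).neg.ennreal_ofReal
  have hexit : AEMeasurable (fun c => ENNReal.ofReal (Q (T, T - c))) (volume.restrict (Iio T)) :=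
    (ContinuousOn.aemeasurable (fun c hc =>
      ((hdiff (T, T - c) (sub_pos.2 hc).le).continuousAt.comp (f := fun c : ℝ => (T, T - c))
        (by fun_prop : Continuous fun c : ℝ => (T, T - c)).continuousAt).continuousWithinAt)
      measurableSet_Iio).ennreal_ofReal
  rw [← setLIntegral_prod _ hloss.aemeasurable, ← Measure.volume_eq_prod,
    setLIntegral_Ioo_prod_Ioi_eq_lintegral_characteristics hloss T,
    ← setLIntegral_Iio_comp_const_sub (fun x => ENNReal.ofReal (Q (T, x))) T,
    ← lintegral_add_left' hexit, setLIntegral_congr_fun measurableSet_Iio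
      fun c hc => ofReal_add_lintegral_neg_fderiv_along_characteristic hT hQ hdiff hdecr hc,
    ← Iio_union_Ico_eq_Iio hT,
    lintegral_union measurableSet_Ico ((Iio_disjoint_Ici le_rfl).mono_right Ico_subset_Ici_self),
    ← setLIntegral_Iio_comp_const_sub (fun x => ENNReal.ofReal (Q (0, x))) 0,
    setLIntegral_congr Ioo_ae_eq_Ico.symm]
  congr 1
  · refine setLIntegral_congr_fun measurableSet_Iio fun c hc => ?_
    rw [max_eq_right (neg_nonneg.2 hc.le), add_neg_cancel, zero_sub]
  · refine setLIntegral_congr_fun measurableSet_Ioo fun c hc => ?_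
    rw [max_eq_left (neg_nonpos.2 hc.1.le), add_zero]

end Transport

theorem ofReal_mul_setIntegral_eq_setLIntegral {α : Type*} [MeasurableSpace α] {μ : Measure α}
    {s : Set α} {f : α → ℝ} {c : ℝ} (hc : 0 ≤ c) (hf : IntegrableOn f s μ) (hs : MeasurableSet s)
    (hf0 : ∀ x ∈ s, 0 ≤ f x) :
    ENNReal.ofReal (c * ∫ x in s, f x ∂μ) = ∫⁻ x in s, ENNReal.ofReal (c * f x) ∂μ := by
  rw [← integral_const_mul]
  exact ofReal_integral_eq_lintegral_ofReal (hf.const_mul c)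
    (ae_restrict_of_forall_mem hs fun x hx => mul_nonneg hc (hf0 x hx))

theorem ENNReal.le_of_add_eq_add_of_le {a b c d : ENNReal} (h : a + c = b + d) (hdc : d ≤ c)
    (hb : b ≠ ⊤) (hd : d ≠ ⊤) : a ≤ b := by
  have hc : c ≠ ⊤ := ne_top_of_le_ne_top (h ▸ ENNReal.add_ne_top.2 ⟨hb, hd⟩) le_add_self
  exact ENNReal.le_of_add_le_add_right hc (h.trans_le (add_le_add_right hdc b))

theorem nonpos_of_ofReal_exp_mul_le {κ T F : ℝ} (hT : 0 < T) (hF : 0 < F)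
    (h : ENNReal.ofReal (exp (κ * T) * F) ≤ ENNReal.ofReal F) : κ ≤ 0 :=
  nonpos_of_mul_nonpos_left (exp_le_one_iff.1 <| (mul_le_iff_le_one_left hF).1 <|
    (ENNReal.ofReal_le_ofReal_iff hF.le).1 h) hT

def weightedDensity (κ : ℝ) (N φ : ℝ → ℝ → ℝ) (p : ℝ × ℝ) : ℝ :=
  exp (κ * p.1) * N p.1 p.2 * φ p.1 p.2

section WeightedDensity

variable {κ : ℝ} {N φ : ℝ → ℝ → ℝ}

theorem weightedDensity_nonneg {t x : ℝ} (hN : 0 ≤ N t x) (hφ : 0 ≤ φ t x) :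
    0 ≤ weightedDensity κ N φ (t, x) :=
  mul_nonneg (mul_nonneg (exp_pos _).le hN) hφ

theorem differentiableAt_weightedDensity {t x : ℝ}
    (hN : DifferentiableAt ℝ (fun p : ℝ × ℝ => N p.1 p.2) (t, x))
    (hφ : DifferentiableAt ℝ (fun p : ℝ × ℝ => φ p.1 p.2) (t, x)) :
    DifferentiableAt ℝ (weightedDensity κ N φ) (t, x) :=
  ((by fun_prop : Differentiable ℝ fun p : ℝ × ℝ => exp (κ * p.1)) _ |>.mul hN).mul hφ

theorem continuous_weightedDensity_boundary
    (hN : ∀ t, DifferentiableAt ℝ (fun p : ℝ × ℝ => N p.1 p.2) (t, 0))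
    (hφ : ∀ t, DifferentiableAt ℝ (fun p : ℝ × ℝ => φ p.1 p.2) (t, 0)) :
    Continuous fun t => weightedDensity κ N φ (t, 0) :=
  continuous_iff_continuousAt.2 fun t =>
    (differentiableAt_weightedDensity (κ := κ) (hN t) (hφ t)).continuousAt.comp
      (f := fun t : ℝ => (t, 0)) (by fun_prop : Continuous fun t : ℝ => (t, (0 : ℝ))).continuousAt

theorem lintegral_weightedDensity_eq {t : ℝ} (hN : ∀ x, 0 ≤ x → N t x = N 0 x)
    (hφ : ∀ x, 0 ≤ x → φ t x = φ 0 x) (hint : IntegrableOn (fun x => N 0 x * φ 0 x) (Ioi 0))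
    (hnonneg : ∀ x, 0 ≤ x → 0 ≤ N 0 x * φ 0 x) :
    ∫⁻ x in Ioi 0, ENNReal.ofReal (weightedDensity κ N φ (t, x)) =
      ENNReal.ofReal (exp (κ * t) * ∫ x in Ioi 0, N 0 x * φ 0 x) := by
  rw [ofReal_mul_setIntegral_eq_setLIntegral (exp_pos _).le hint measurableSet_Ioi
    fun x hx => hnonneg x hx.le]
  refine setLIntegral_congr_fun measurableSet_Ioi fun x hx => ?_
  rw [weightedDensity, hN x hx.le, hφ x hx.le, mul_assoc]

theorem ofReal_weightedDensity_boundary_le {B : ℝ → ℝ → ℝ} {g : ℝ → ℝ} {t : ℝ}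
    (hNbc : N t 0 = ∫ x in Ioi 0, B t x * N t x)
    (hBN : IntegrableOn (fun x => B t x * N t x) (Ioi 0))
    (hBN0 : ∀ x, 0 ≤ x → 0 ≤ B t x * N t x) (hφ0 : 0 ≤ φ t 0)
    (hg : ∀ x, 0 ≤ x → exp (κ * t) * φ t 0 * (B t x * N t x) ≤ g x) :
    ENNReal.ofReal (weightedDensity κ N φ (t, 0)) ≤ ∫⁻ x in Ioi 0, ENNReal.ofReal (g x) :=
  calc ENNReal.ofReal (weightedDensity κ N φ (t, 0))
      = ENNReal.ofReal (exp (κ * t) * φ t 0 * ∫ x in Ioi 0, B t x * N t x) := by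
        rw [weightedDensity, ← hNbc]; ring_nf
    _ = ∫⁻ x in Ioi 0, ENNReal.ofReal (exp (κ * t) * φ t 0 * (B t x * N t x)) :=
        ofReal_mul_setIntegral_eq_setLIntegral (mul_nonneg (exp_pos _).le hφ0) hBN
          measurableSet_Ioi fun x hx => hBN0 x hx.le
    _ ≤ _ := setLIntegral_mono' measurableSet_Ioi fun x hx =>
        ENNReal.ofReal_le_ofReal (hg x hx.le)

theorem fderiv_weightedDensity_one_one_le {B d : ℝ → ℝ → ℝ} {lam μ t x : ℝ}
    (hN : DifferentiableAt ℝ (fun p : ℝ × ℝ => N p.1 p.2) (t, x))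
    (hφ : DifferentiableAt ℝ (fun p : ℝ × ℝ => φ p.1 p.2) (t, x)) (hN0 : 0 ≤ N t x)
    (hNpde : deriv (fun s => N s x) t + deriv (fun y => N t y) x + (d t x + lam) * N t x = 0)
    (hφsub : B t x * φ t 0 ≤
      -(deriv (fun s => φ s x) t) - deriv (fun y => φ t y) x + (d t x + μ) * φ t x) :
    fderiv ℝ (weightedDensity (lam - μ) N φ) (t, x) (1, 1) ≤
      -(exp ((lam - μ) * t) * φ t 0 * (B t x * N t x)) := by
  have hexp : HasLineDerivAt ℝ (fun p : ℝ × ℝ => exp ((lam - μ) * p.1))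
      (exp ((lam - μ) * t) * (lam - μ)) (t, x) (1, 1) :=
    show HasDerivAt (fun u : ℝ => exp ((lam - μ) * (t + u * 1))) _ 0 from
      (((hasDerivAt_id (0 : ℝ)).mul_const 1).const_add t |>.const_mul (lam - μ)).exp.congr_deriv
        (by simp)
  have hline : HasLineDerivAt ℝ (weightedDensity (lam - μ) N φ)
      (exp ((lam - μ) * t) * ((lam - μ) * N t x * φ t x
        + (deriv (fun s => N s x) t + deriv (fun y => N t y) x) * φ t x
        + N t x * (deriv (fun s => φ s x) t + deriv (fun y => φ t y) x))) (t, x) (1, 1) :=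
    ((hexp.mul hN.hasLineDerivAt_one_one).mul hφ.hasLineDerivAt_one_one).congr_deriv
      (by simp; ring)
  rw [← (differentiableAt_weightedDensity hN hφ).lineDeriv_eq_fderiv, hline.lineDeriv,
    show deriv (fun s => N s x) t + deriv (fun y => N t y) x = -((d t x + lam) * N t x) by
      linarith]
  nlinarith [mul_le_mul_of_nonneg_left hφsub (mul_nonneg (exp_pos ((lam - μ) * t)).le hN0),
    exp_pos ((lam - μ) * t)]

end WeightedDensity

theorem lintegral_weightedDensity_le {N φ : ℝ → ℝ → ℝ} {T lam μ : ℝ} {B d : ℝ → ℝ → ℝ} (hT : 0 ≤ T)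
    (hB : ∀ t x, 0 ≤ x → 0 ≤ B t x) (hN0 : ∀ t x, 0 ≤ x → 0 ≤ N t x)
    (hNdiff : ∀ t x, 0 ≤ x → DifferentiableAt ℝ (fun p : ℝ × ℝ => N p.1 p.2) (t, x))
    (hNpde : ∀ t x, 0 ≤ x →
      deriv (fun s => N s x) t + deriv (fun y => N t y) x + (d t x + lam) * N t x = 0)
    (hNbc : ∀ t, N t 0 = ∫ x in Ioi 0, B t x * N t x)
    (hBN : ∀ t, IntegrableOn (fun x => B t x * N t x) (Ioi 0))
    (hφpos : ∀ t x, 0 ≤ x → 0 < φ t x)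
    (hφdiff : ∀ t x, 0 ≤ x → DifferentiableAt ℝ (fun p : ℝ × ℝ => φ p.1 p.2) (t, x))
    (hφsub : ∀ t x, 0 ≤ x → B t x * φ t 0 ≤
      -(deriv (fun s => φ s x) t) - deriv (fun y => φ t y) x + (d t x + μ) * φ t x)
    (hstart : ∫⁻ x in Ioi 0, ENNReal.ofReal (weightedDensity (lam - μ) N φ (0, x)) ≠ ⊤) :
    ∫⁻ x in Ioi 0, ENNReal.ofReal (weightedDensity (lam - μ) N φ (T, x)) ≤
      ∫⁻ x in Ioi 0, ENNReal.ofReal (weightedDensity (lam - μ) N φ (0, x)) := by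
  have hBN0 : ∀ t x, 0 ≤ x → 0 ≤ B t x * N t x :=
    fun t x hx => mul_nonneg (hB t x hx) (hN0 t x hx)
  have hloss : ∀ p : ℝ × ℝ, 0 ≤ p.2 →
      exp ((lam - μ) * p.1) * φ p.1 0 * (B p.1 p.2 * N p.1 p.2) ≤
        -fderiv ℝ (weightedDensity (lam - μ) N φ) p (1, 1) := fun p hp =>
    le_neg.1 (fderiv_weightedDensity_one_one_le (hNdiff _ _ hp) (hφdiff _ _ hp) (hN0 _ _ hp)
      (hNpde _ _ hp) (hφsub _ _ hp))
  have hbalance := lintegral_transport_balance hT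
    (fun p hp => weightedDensity_nonneg (hN0 _ _ hp) (hφpos _ _ hp).le)
    (fun p hp => differentiableAt_weightedDensity (hNdiff _ _ hp) (hφdiff _ _ hp))
    (fun p hp => neg_nonneg.1 <| (mul_nonneg (mul_nonneg (exp_pos _).le
      (hφpos _ _ le_rfl).le) (hBN0 _ _ hp)).trans (hloss p hp))
  have hinflux := lintegral_mono (μ := volume.restrict (Ioo 0 T)) fun t =>
    ofReal_weightedDensity_boundary_le (hNbc t) (hBN t) (hBN0 t) (hφpos t 0 le_rfl).le
      fun x hx => hloss (t, x) hx
  have hinflux_ne_top :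
      ∫⁻ t in Ioo 0 T, ENNReal.ofReal (weightedDensity (lam - μ) N φ (t, 0)) ≠ ⊤ :=
    ((continuous_weightedDensity_boundary (κ := lam - μ) (fun t => hNdiff t 0 le_rfl)
      fun t => hφdiff t 0 le_rfl).integrableOn_Icc.mono_set Ioo_subset_Icc_self).lintegral_lt_top.ne
  exact ENNReal.le_of_add_eq_add_of_le hbalance hinflux hstart hinflux_ne_top

theorem floquet_eigenvalue_le_subeigenvalue_general
    (T : ℝ) (hT : 0 < T) (B d : ℝ → ℝ → ℝ)
    (hB : ∀ t x, 0 ≤ x → 0 ≤ B t x)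
    (lam : ℝ) (N : ℝ → ℝ → ℝ)
    (hN0 : ∀ t x, 0 ≤ x → 0 ≤ N t x)
    (hNdiff : ∀ t x, 0 ≤ x → DifferentiableAt ℝ (fun p : ℝ × ℝ => N p.1 p.2) (t, x))
    (hNper : ∀ t x, 0 ≤ x → N (t + T) x = N t x)
    (hNpde : ∀ t x, 0 ≤ x →
      deriv (fun s => N s x) t + deriv (fun y => N t y) x
        + (d t x + lam) * N t x = 0)
    (hNbc : ∀ t, N t 0 = ∫ x in Set.Ioi (0 : ℝ), B t x * N t x)
    (μ : ℝ) (φ : ℝ → ℝ → ℝ) (hφ : IsSubeig T B d μ φ)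
    (n : ℝ → ℝ → ℝ) (hn : n = fun t x => Real.exp (lam * t) * N t x)
    (hint₁ : ∀ t, IntegrableOn (fun x => n t x * φ t x) (Set.Ioi (0 : ℝ)))
    (hint₃ : ∀ t, IntegrableOn (fun x => B t x * n t x) (Set.Ioi (0 : ℝ)))
    (hpos : 0 < ∫ x in Set.Ioi (0 : ℝ), N 0 x * φ 0 x) :
    lam ≤ μ := by
  obtain ⟨hφpos, hφdiff, hφper, hφsub⟩ := hφ
  subst hn
  have hBN : ∀ t, IntegrableOn (fun x => B t x * N t x) (Ioi 0) := fun t =>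
    IntegrableOn.congr_fun ((hint₃ t).const_mul (exp (-(lam * t))))
      (fun x _ => by simp only [exp_neg]; field_simp) measurableSet_Ioi
  have hF₀ : IntegrableOn (fun x => N 0 x * φ 0 x) (Ioi 0) := by simpa using hint₁ 0
  have hF₀0 : ∀ x, 0 ≤ x → 0 ≤ N 0 x * φ 0 x :=
    fun x hx => mul_nonneg (hN0 0 x hx) (hφpos 0 x hx).le
  have hstart := lintegral_weightedDensity_eq (κ := lam - μ) (t := 0) (fun _ _ => rfl)
    (fun _ _ => rfl) hF₀ hF₀0
  have hend := lintegral_weightedDensity_eq (κ := lam - μ) (t := T)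
    (fun x hx => by simpa using hNper 0 x hx) (fun x hx => by simpa using hφper 0 x hx) hF₀ hF₀0
  have hdecay := lintegral_weightedDensity_le hT.le hB hN0 hNdiff hNpde hNbc hBN hφpos hφdiff
    hφsub (hstart ▸ ENNReal.ofReal_ne_top)
  rw [hstart, hend, mul_zero, exp_zero, one_mul] at hdecay
  linarith [nonpos_of_ofReal_exp_mul_le hT hpos hdecay]

/-- If `N` is a nonnegative `T`-periodic (primal) Floquet eigenfunction for the
eigenvalue `λ`, so that `n(t,x) = e^{λt} N(t,x)` solves the renewal equation,
and `μ` admits a positive `T`-periodic subeigenfunction `φ`, then (under the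
natural integrability assumptions, and provided `∫₀^∞ N(0,x) φ(0,x) dx > 0`)
one has `λ ≤ μ`. -/
theorem floquet_eigenvalue_le_subeigenvalue
    (T : ℝ) (hT : 0 < T) (B d : ℝ → ℝ → ℝ)
    (hB : ∀ t x, 0 ≤ x → 0 ≤ B t x) (hd : ∀ t x, 0 ≤ x → 0 ≤ d t x)
    (hBp : ∀ t x, 0 ≤ x → B (t + T) x = B t x)
    (hdp : ∀ t x, 0 ≤ x → d (t + T) x = d t x)
    (lam : ℝ) (N : ℝ → ℝ → ℝ)
    (hN0 : ∀ t x, 0 ≤ x → 0 ≤ N t x)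
    (hNdiff : ∀ t x, 0 ≤ x → DifferentiableAt ℝ (fun p : ℝ × ℝ => N p.1 p.2) (t, x))
    (hNper : ∀ t x, 0 ≤ x → N (t + T) x = N t x)
    (hNpde : ∀ t x, 0 ≤ x →
      deriv (fun s => N s x) t + deriv (fun y => N t y) x
        + (d t x + lam) * N t x = 0)
    (hNbc : ∀ t, N t 0 = ∫ x in Set.Ioi (0 : ℝ), B t x * N t x)
    (μ : ℝ) (φ : ℝ → ℝ → ℝ) (hφ : IsSubeig T B d μ φ)
    (n : ℝ → ℝ → ℝ) (hn : n = fun t x => Real.exp (lam * t) * N t x)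
    (hint₁ : ∀ t, IntegrableOn (fun x => n t x * φ t x) (Set.Ioi (0 : ℝ)))
    (hint₂ : ∀ t, IntegrableOn
      (fun x => deriv (fun y => n t y * φ t y) x) (Set.Ioi (0 : ℝ)))
    (hint₃ : ∀ t, IntegrableOn (fun x => B t x * n t x) (Set.Ioi (0 : ℝ)))
    (hint₄ : ∀ t, IntegrableOn (fun x => d t x * n t x * φ t x) (Set.Ioi (0 : ℝ)))
    (hlim : ∀ t, Filter.Tendsto (fun x => n t x * φ t x) Filter.atTop (nhds 0))
    (hF : ∀ t, HasDerivAt (fun s => ∫ x in Set.Ioi (0 : ℝ), n s x * φ s x)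
      (∫ x in Set.Ioi (0 : ℝ), deriv (fun s => n s x * φ s x) t) t)
    (hpos : 0 < ∫ x in Set.Ioi (0 : ℝ), N 0 x * φ 0 x) :
    lam ≤ μ :=
  floquet_eigenvalue_le_subeigenvalue_general T hT B d hB lam N hN0 hNdiff hNper hNpde hNbc μ φ hφ n
    hn hint₁ hint₃ hpos
end
end
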